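/- Let T be a tree rooted at v in which every vertex other than v has degree at most 2, and suppose |C^2(v)| ≥ 1 or |C^1(v)| ≥ 2. Then no dissociation set of T containing v has size Σ_{w∈C(v)} ψ(T_w) + 1, and hence ψ(T) = Σ_{w∈C(v)} ψ(T_w). -/

import Mathlib

open scoped Classical

/-- `F` is a dissociation set of `G`: the induced subgraph `G[F]` has maximum degree ≤ 1. -/
def IsDissocSet {V : Type*} (G : SimpleGraph V) (F : Set V) : Prop :=
  ∀ u ∈ F, ∀ w ∈ F, ∀ w' ∈ F, G.Adj u w → G.Adj u w' → w = w'

/-- `F` is a maximum dissociation set of `G`. -/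
def IsMaxDissocSet {V : Type*} (G : SimpleGraph V) (F : Set V) : Prop :=
  IsDissocSet G F ∧ ∀ F' : Set V, IsDissocSet G F' → F'.ncard ≤ F.ncard

/-- The dissociation number ψ(G). -/
noncomputable def dissNum {V : Type*} (G : SimpleGraph V) : ℕ :=
  sSup {n | ∃ F : Set V, IsDissocSet G F ∧ F.ncard = n}

/-- `F` is a maximum dissociation set of the induced subgraph `G[S]`. -/
def IsMaxDissocOn {V : Type*} (G : SimpleGraph V) (S F : Set V) : Prop :=
  F ⊆ S ∧ IsDissocSet G F ∧
    ∀ F' : Set V, F' ⊆ S → IsDissocSet G F' → F'.ncard ≤ F.ncard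

/-- The dissociation number of the induced subgraph `G[S]`. -/
noncomputable def dissNumOn {V : Type*} (G : SimpleGraph V) (S : Set V) : ℕ :=
  sSup {n | ∃ F : Set V, F ⊆ S ∧ IsDissocSet G F ∧ F.ncard = n}

/-- The spider with center `none` and `k` legs, leg `i` being a path on `n i` vertices
hanging from the center. -/
def spider (k : ℕ) (n : Fin k → ℕ) : SimpleGraph (Option (Σ i : Fin k, Fin (n i))) :=
  SimpleGraph.fromRel (fun a b =>
    (a = none ∧ ∃ (i : Fin k) (h : 0 < n i), b = some ⟨i, ⟨0, h⟩⟩) ∨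
    (∃ (i : Fin k) (j j' : Fin (n i)), a = some ⟨i, j⟩ ∧ b = some ⟨i, j'⟩ ∧ (j' : ℕ) = j + 1))

/-- The vertex set of the `i`-th leg of the spider (the subtree below the `i`-th child). -/
def legSet (k : ℕ) (n : Fin k → ℕ) (i : Fin k) : Set (Option (Σ i : Fin k, Fin (n i))) :=
  {x | ∃ j : Fin (n i), x = some ⟨i, j⟩}

/-! ### Auxiliary material: abstract paths on naturals -/

/-- abstract dissociation property for a finite set of naturals viewed as a path -/
private def PD (T : Finset ℕ) : Prop :=
  ∀ u ∈ T, ∀ w ∈ T, ∀ w' ∈ T, (u + 1 = w ∨ w + 1 = u) → (u + 1 = w' ∨ w' + 1 = u) → w = w'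

private lemma PD_shift (T : Finset ℕ) (c : ℕ) (hT : PD T) (hge : ∀ a ∈ T, c ≤ a) :
    PD (T.image (· - c)) := by
  intro u hu w hw w' hw' h1 h2
  simp only [Finset.mem_image] at hu hw hw'
  obtain ⟨a, ha, rfl⟩ := hu
  obtain ⟨b, hb, rfl⟩ := hw
  obtain ⟨b', hb', rfl⟩ := hw'
  have hca := hge a ha; have hcb := hge b hb; have hcb' := hge b' hb'
  have : b = b' := by
    refine hT a ha b hb b' hb' ?_ ?_ <;> omega
  omega

private lemma PD_subset {T S : Finset ℕ} (hT : PD T) (h : S ⊆ T) : PD S :=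
  fun u hu w hw w' hw' h1 h2 => hT u (h hu) w (h hw) w' (h hw') h1 h2

private lemma PD_bound : ∀ m : ℕ, ∀ T : Finset ℕ, PD T → (∀ a ∈ T, a < m) →
    T.card ≤ m - m / 3 := by
  intro m
  induction m using Nat.strong_induction_on with
  | _ m ih =>
    intro T hPD hlt
    by_cases hm : 3 ≤ m
    · have hsplit := Finset.card_filter_add_card_filter_not (s := T)
        (p := fun a => a < 3)
      set T1 := T.filter (fun a => a < 3) with hT1
      set T2 := T.filter (fun a => ¬ a < 3) with hT2
      have h1 : T1.card ≤ 2 := by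
        by_contra hc
        push_neg at hc
        have hsub : T1 ⊆ {0, 1, 2} := by
          intro a ha
          simp only [hT1, Finset.mem_filter] at ha
          simp only [Finset.mem_insert, Finset.mem_singleton]
          omega
        have hcard : ({0, 1, 2} : Finset ℕ).card = 3 := by decide
        have heq : T1 = {0, 1, 2} := Finset.eq_of_subset_of_card_le hsub (by omega)
        have h0 : (0 : ℕ) ∈ T :=
          (Finset.mem_filter.mp (heq ▸ (by decide : (0:ℕ) ∈ ({0,1,2} : Finset ℕ)))).1
        have h1' : (1 : ℕ) ∈ T :=
          (Finset.mem_filter.mp (heq ▸ (by decide : (1:ℕ) ∈ ({0,1,2} : Finset ℕ)))).1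
        have h2' : (2 : ℕ) ∈ T :=
          (Finset.mem_filter.mp (heq ▸ (by decide : (2:ℕ) ∈ ({0,1,2} : Finset ℕ)))).1
        have := hPD 1 h1' 0 h0 2 h2' (by omega) (by omega)
        omega
      have hge : ∀ a ∈ T2, 3 ≤ a := by
        intro a ha; simp only [hT2, Finset.mem_filter] at ha; omega
      have hPD2 : PD (T2.image (· - 3)) :=
        PD_shift _ _ (PD_subset hPD (Finset.filter_subset _ _)) hge
      have hlt2 : ∀ a ∈ T2.image (· - 3), a < m - 3 := by
        intro a ha
        simp only [Finset.mem_image] at ha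
        obtain ⟨b, hb, rfl⟩ := ha
        have := hlt b (Finset.filter_subset _ _ hb)
        have := hge b hb
        show b - 3 < m - 3
        omega
      have hcard2 : (T2.image (· - 3)).card = T2.card := by
        apply Finset.card_image_of_injOn
        intro a ha b hb hab
        have hab' : a - 3 = b - 3 := hab
        have := hge a ha; have := hge b hb; omega
      have := ih (m - 3) (by omega) _ hPD2 hlt2
      omega
    · have : T ⊆ Finset.range m := by
        intro a ha; exact Finset.mem_range.mpr (hlt a ha)
      have := Finset.card_le_card this
      simp [Finset.card_range] at this
      omega

private lemma card_mod3 : ∀ m : ℕ,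
    ((Finset.range m).filter (fun j => j % 3 ≠ 2)).card = m - m / 3 := by
  intro m
  induction m with
  | zero => simp
  | succ m ih =>
    rw [Finset.range_add_one, Finset.filter_insert]
    by_cases hm : m % 3 ≠ 2
    · rw [if_pos hm, Finset.card_insert_of_notMem (by simp)]
      omega
    · rw [if_neg hm]
      omega

private lemma PD_zero_mem (m : ℕ) (T : Finset ℕ) (hPD : PD T) (hlt : ∀ a ∈ T, a < m)
    (hm : m % 3 ≠ 0) (hcard : m - m / 3 ≤ T.card) : 0 ∈ T := by
  by_contra h0
  have hge : ∀ a ∈ T, 1 ≤ a := by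
    intro a ha
    rcases Nat.eq_zero_or_pos a with rfl | h
    · exact absurd ha h0
    · exact h
  have hPD' := PD_shift T 1 hPD hge
  have hlt' : ∀ a ∈ T.image (· - 1), a < m - 1 := by
    intro a ha
    simp only [Finset.mem_image] at ha
    obtain ⟨b, hb, rfl⟩ := ha
    have := hlt b hb; have := hge b hb
    show b - 1 < m - 1
    omega
  have hb := PD_bound (m - 1) _ hPD' hlt'
  have hc : (T.image (· - 1)).card = T.card := by
    apply Finset.card_image_of_injOn
    intro a ha b hb hab
    have hab' : a - 1 = b - 1 := hab
    have := hge a ha; have := hge b hb; omega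
  omega

private lemma PD_one_mem (m : ℕ) (T : Finset ℕ) (hPD : PD T) (hlt : ∀ a ∈ T, a < m)
    (hm : m % 3 = 2) (hcard : m - m / 3 ≤ T.card) : 1 ∈ T := by
  by_contra h1
  have hsplit := Finset.card_filter_add_card_filter_not (s := T) (p := fun a => a < 2)
  have hc1 : (T.filter (fun a => a < 2)).card ≤ 1 := by
    have : T.filter (fun a => a < 2) ⊆ {0} := by
      intro a ha
      simp only [Finset.mem_filter] at ha
      have : a ≠ 1 := fun e => h1 (e ▸ ha.1)
      simp only [Finset.mem_singleton]
      omega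
    simpa using Finset.card_le_card this
  set T2 := T.filter (fun a => ¬ a < 2) with hT2
  have hge : ∀ a ∈ T2, 2 ≤ a := by
    intro a ha; simp only [hT2, Finset.mem_filter] at ha; omega
  have hPD' := PD_shift T2 2 (PD_subset hPD (Finset.filter_subset _ _)) hge
  have hlt' : ∀ a ∈ T2.image (· - 2), a < m - 2 := by
    intro a ha
    simp only [Finset.mem_image] at ha
    obtain ⟨b, hb, rfl⟩ := ha
    have := hlt b (Finset.filter_subset _ _ hb); have := hge b hb
    show b - 2 < m - 2
    omega
  have hb := PD_bound (m - 2) _ hPD' hlt'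
  have hc : (T2.image (· - 2)).card = T2.card := by
    apply Finset.card_image_of_injOn
    intro a ha b hb hab
    have hab' : a - 2 = b - 2 := hab
    have := hge a ha; have := hge b hb; omega
  omega

/-! ### Spider adjacency lemmas -/

private lemma spider_adj_some_some {k : ℕ} {n : Fin k → ℕ} {i i' : Fin k} {j : Fin (n i)}
    {j' : Fin (n i')} (h : (spider k n).Adj (some ⟨i, j⟩) (some ⟨i', j'⟩)) :
    i = i' := by
  obtain ⟨-, h | h⟩ := h <;>
  · rcases h with ⟨h1, -⟩ | ⟨a, b, c, h1, h2, -⟩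
    · exact absurd h1 (by simp)
    · simp only [Option.some.injEq] at h1 h2
      rw [(Sigma.mk.inj_iff.mp h1).1, (Sigma.mk.inj_iff.mp h2).1]

private lemma spider_adj_leg {k : ℕ} {n : Fin k → ℕ} {i : Fin k} {j j' : Fin (n i)} :
    (spider k n).Adj (some ⟨i, j⟩) (some ⟨i, j'⟩) ↔ ((j' : ℕ) = j + 1 ∨ (j : ℕ) = j' + 1) := by
  constructor
  · rintro ⟨hne, h | h⟩ <;>
    · rcases h with ⟨h1, -⟩ | ⟨a, b, c, h1, h2, h3⟩
      · exact absurd h1 (by simp)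
      · simp only [Option.some.injEq] at h1 h2
        obtain ⟨rfl, hb⟩ := Sigma.mk.inj_iff.mp h1
        obtain ⟨-, hc⟩ := Sigma.mk.inj_iff.mp h2
        rw [heq_eq_eq] at hb hc
        subst hb; subst hc
        first
        | exact Or.inl h3
        | exact Or.inr h3
  · intro hor
    refine ⟨?_, ?_⟩
    · simp only [ne_eq, Option.some.injEq, Sigma.mk.inj_iff, heq_eq_eq, true_and]
      intro hjj
      subst hjj
      omega
    · rcases hor with h1 | h1
      · exact Or.inl (Or.inr ⟨i, j, j', rfl, rfl, h1⟩)
      · exact Or.inr (Or.inr ⟨i, j', j, rfl, rfl, h1⟩)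

private lemma spider_adj_none {k : ℕ} {n : Fin k → ℕ} {i : Fin k} {j : Fin (n i)} :
    (spider k n).Adj none (some ⟨i, j⟩) ↔ (j : ℕ) = 0 := by
  constructor
  · rintro ⟨hne, h | h⟩
    · rcases h with ⟨-, a, ha, h2⟩ | ⟨a, b, c, h1, -, -⟩
      · simp only [Option.some.injEq] at h2
        obtain ⟨rfl, hb⟩ := Sigma.mk.inj_iff.mp h2
        rw [heq_eq_eq] at hb
        rw [hb]
      · exact absurd h1 (by simp)
    · rcases h with ⟨h1, -⟩ | ⟨a, b, c, -, h2, -⟩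
      · exact absurd h1 (by simp)
      · exact absurd h2 (by simp)
  · intro hj
    refine ⟨by simp, Or.inl (Or.inl ⟨rfl, i, j.pos, ?_⟩)⟩
    simp only [Option.some.injEq, Sigma.mk.inj_iff, heq_eq_eq, true_and]
    exact Fin.ext hj

/-! ### Cardinality decomposition -/

private lemma ncard_biUnion {ι V : Type*} [Finite V] (s : Finset ι) (f : ι → Set V)
    (hd : ∀ i ∈ s, ∀ j ∈ s, i ≠ j → Disjoint (f i) (f j)) :
    (⋃ i ∈ s, f i).ncard = ∑ i ∈ s, (f i).ncard := by
  classical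
  induction s using Finset.induction with
  | empty => simp
  | @insert a s ha ih =>
    rw [Finset.sum_insert ha, Finset.set_biUnion_insert]
    rw [Set.ncard_union_eq ?_ (Set.toFinite _) (Set.toFinite _)]
    · rw [ih (fun i hi j hj hij =>
        hd i (Finset.mem_insert_of_mem hi) j (Finset.mem_insert_of_mem hj) hij)]
    · rw [Set.disjoint_iUnion_right]
      intro i
      rw [Set.disjoint_iUnion_right]
      intro hi
      exact hd a (Finset.mem_insert_self a s) i (Finset.mem_insert_of_mem hi)
        (fun e => ha (e ▸ hi))

private lemma diff_eq_biUnion {k : ℕ} {n : Fin k → ℕ}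
    (F : Set (Option (Σ i : Fin k, Fin (n i)))) :
    F \ {none} = ⋃ i ∈ Finset.univ, F ∩ legSet k n i := by
  ext x
  constructor
  · rintro ⟨hx, hne⟩
    match x, hne with
    | some ⟨i, j⟩, _ => exact Set.mem_biUnion (Finset.mem_univ i) ⟨hx, j, rfl⟩
  · intro hx'
    obtain ⟨i, -, hx, j, rfl⟩ := Set.mem_iUnion₂.mp hx'
    exact ⟨hx, by simp⟩

private lemma ncard_sum {k : ℕ} {n : Fin k → ℕ} (F : Set (Option (Σ i : Fin k, Fin (n i)))) :
    (F \ {none}).ncard = ∑ i, (F ∩ legSet k n i).ncard := by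
  rw [diff_eq_biUnion F, ncard_biUnion]
  intro i _ j _ hij
  rw [Set.disjoint_left]
  rintro x ⟨-, j1, rfl⟩ ⟨-, j2, he⟩
  simp only [Option.some.injEq, Sigma.mk.inj_iff] at he
  exact hij (he.1.symm ▸ rfl)

private lemma ncard_decomp {k : ℕ} {n : Fin k → ℕ} (F : Set (Option (Σ i : Fin k, Fin (n i))))
    (hF : none ∈ F) :
    F.ncard = 1 + ∑ i, (F ∩ legSet k n i).ncard := by
  rw [← ncard_sum F, ← Set.ncard_inter_add_ncard_diff_eq_ncard F {none} (Set.toFinite _)]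
  congr 1
  have : F ∩ {none} = {none} := by
    ext x; simp only [Set.mem_inter_iff, Set.mem_singleton_iff]
    exact ⟨fun h => h.2, fun h => ⟨h ▸ hF, h⟩⟩
  rw [this, Set.ncard_singleton]

private lemma ncard_decomp' {k : ℕ} {n : Fin k → ℕ} (F : Set (Option (Σ i : Fin k, Fin (n i))))
    (hF : none ∉ F) :
    F.ncard = ∑ i, (F ∩ legSet k n i).ncard := by
  rw [← ncard_sum F]
  congr 1
  ext x
  exact ⟨fun hx => ⟨hx, fun e => hF (e ▸ hx)⟩, fun hx => hx.1⟩

/-! ### Transfer between legs and abstract paths -/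

private noncomputable def legT {k : ℕ} {n : Fin k → ℕ}
    (F : Set (Option (Σ i : Fin k, Fin (n i)))) (i : Fin k) : Finset ℕ :=
  (Finset.univ.filter (fun j : Fin (n i) => some ⟨i, j⟩ ∈ F)).image Fin.val

private lemma mem_legT {k : ℕ} {n : Fin k → ℕ} {F : Set (Option (Σ i : Fin k, Fin (n i)))}
    {i : Fin k} {a : ℕ} :
    a ∈ legT F i ↔ ∃ j : Fin (n i), some ⟨i, j⟩ ∈ F ∧ (j : ℕ) = a := by
  simp [legT]

private lemma lt_legT {k : ℕ} {n : Fin k → ℕ} {F : Set (Option (Σ i : Fin k, Fin (n i)))}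
    {i : Fin k} : ∀ a ∈ legT F i, a < n i := by
  intro a ha
  obtain ⟨j, -, rfl⟩ := mem_legT.mp ha
  exact j.is_lt

private lemma card_legT {k : ℕ} {n : Fin k → ℕ} (F : Set (Option (Σ i : Fin k, Fin (n i))))
    (i : Fin k) : (legT F i).card = (F ∩ legSet k n i).ncard := by
  rw [legT, Finset.card_image_of_injective _ Fin.val_injective]
  have himg : F ∩ legSet k n i
      = (fun j : Fin (n i) => (some ⟨i, j⟩ : Option (Σ i : Fin k, Fin (n i)))) ''
        {j | some ⟨i, j⟩ ∈ F} := by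
    ext x
    constructor
    · rintro ⟨hx, j, rfl⟩
      exact ⟨j, hx, rfl⟩
    · rintro ⟨j, hj, rfl⟩
      exact ⟨hj, j, rfl⟩
  rw [himg, Set.ncard_image_of_injective _ ?_]
  · have : {j : Fin (n i) | some ⟨i, j⟩ ∈ F}
        = ↑(Finset.univ.filter (fun j : Fin (n i) => some ⟨i, j⟩ ∈ F)) := by
      ext j; simp
    rw [this, Set.ncard_coe_finset]
  · intro a b hab
    simpa using hab

private lemma PD_legT {k : ℕ} {n : Fin k → ℕ} {F : Set (Option (Σ i : Fin k, Fin (n i)))}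
    {i : Fin k} (hF : IsDissocSet (spider k n) F) : PD (legT F i) := by
  intro u hu w hw w' hw' h1 h2
  obtain ⟨ju, hju, rfl⟩ := mem_legT.mp hu
  obtain ⟨jw, hjw, rfl⟩ := mem_legT.mp hw
  obtain ⟨jw', hjw', rfl⟩ := mem_legT.mp hw'
  have a1 : (spider k n).Adj (some ⟨i, ju⟩) (some ⟨i, jw⟩) := spider_adj_leg.mpr (by omega)
  have a2 : (spider k n).Adj (some ⟨i, ju⟩) (some ⟨i, jw'⟩) := spider_adj_leg.mpr (by omega)
  have := hF _ hju _ hjw _ hjw' a1 a2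
  simp only [Option.some.injEq, Sigma.mk.inj_iff, heq_eq_eq, true_and] at this
  rw [this]

private lemma leg_card_le {k : ℕ} {n : Fin k → ℕ} {F : Set (Option (Σ i : Fin k, Fin (n i)))}
    (hF : IsDissocSet (spider k n) F) (i : Fin k) :
    (F ∩ legSet k n i).ncard ≤ n i - n i / 3 := by
  rw [← card_legT]
  exact PD_bound (n i) _ (PD_legT hF) lt_legT

/-- the canonical optimal set on leg `i` -/
private def Bset (k : ℕ) (n : Fin k → ℕ) (i : Fin k) :
    Set (Option (Σ i : Fin k, Fin (n i))) :=
  {x | ∃ j : Fin (n i), x = some ⟨i, j⟩ ∧ (j : ℕ) % 3 ≠ 2}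

private lemma Bset_subset {k : ℕ} {n : Fin k → ℕ} (i : Fin k) :
    Bset k n i ⊆ legSet k n i := by
  rintro x ⟨j, rfl, -⟩; exact ⟨j, rfl⟩

private lemma Bset_dissoc {k : ℕ} {n : Fin k → ℕ} (s : Finset (Fin k)) :
    IsDissocSet (spider k n) (⋃ i ∈ s, Bset k n i) := by
  intro u hu w hw w' hw' h1 h2
  obtain ⟨iu, -, ju, rfl, hju⟩ := Set.mem_iUnion₂.mp hu
  obtain ⟨iw, -, jw, rfl, hjw⟩ := Set.mem_iUnion₂.mp hw
  obtain ⟨iw', -, jw', rfl, hjw'⟩ := Set.mem_iUnion₂.mp hw'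
  obtain rfl := spider_adj_some_some h1
  obtain rfl := spider_adj_some_some h2
  have v1 := spider_adj_leg.mp h1
  have v2 := spider_adj_leg.mp h2
  have : (jw : ℕ) = (jw' : ℕ) := by omega
  simp only [Option.some.injEq, Sigma.mk.inj_iff, heq_eq_eq, true_and]
  exact Fin.ext this

private lemma Bset_ncard {k : ℕ} {n : Fin k → ℕ} (i : Fin k) :
    (Bset k n i).ncard = n i - n i / 3 := by
  have himg : Bset k n i
      = (fun j : Fin (n i) => (some ⟨i, j⟩ : Option (Σ i : Fin k, Fin (n i)))) ''
        {j | (j : ℕ) % 3 ≠ 2} := by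
    ext x
    constructor
    · rintro ⟨j, rfl, hj⟩; exact ⟨j, hj, rfl⟩
    · rintro ⟨j, hj, rfl⟩; exact ⟨j, rfl, hj⟩
  rw [himg, Set.ncard_image_of_injective _ (fun a b hab => by simpa using hab)]
  have : {j : Fin (n i) | (j : ℕ) % 3 ≠ 2}
      = ↑(Finset.univ.filter (fun j : Fin (n i) => (j : ℕ) % 3 ≠ 2)) := by
    ext j; simp
  rw [this, Set.ncard_coe_finset, ← card_mod3 (n i)]
  apply Finset.card_nbij (i := Fin.val)
  · intro a ha; simp only [Finset.mem_coe, Finset.mem_filter, Finset.mem_univ, true_and] at ha ⊢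
    simp only [Finset.mem_range]
    exact ⟨a.is_lt, ha⟩
  · intro a _ b _ hab; exact Fin.val_injective hab
  · intro a ha
    simp only [Finset.coe_filter, Finset.mem_range, Set.mem_setOf_eq] at ha
    exact ⟨⟨a, ha.1⟩, by simp [ha.2], rfl⟩

private lemma dissoc_empty {V : Type*} (G : SimpleGraph V) : IsDissocSet G (∅ : Set V) := by
  intro u hu
  exact absurd hu (Set.notMem_empty u)

private lemma dissoc_subset {V : Type*} {G : SimpleGraph V} {F F' : Set V}
    (h : IsDissocSet G F) (hsub : F' ⊆ F) : IsDissocSet G F' :=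
  fun u hu w hw w' hw' h1 h2 => h u (hsub hu) w (hsub hw) w' (hsub hw') h1 h2

private lemma dissNumOn_leg {k : ℕ} {n : Fin k → ℕ} (i : Fin k) :
    dissNumOn (spider k n) (legSet k n i) = n i - n i / 3 := by
  have hub : ∀ m ∈ {m | ∃ F, F ⊆ legSet k n i ∧ IsDissocSet (spider k n) F ∧ F.ncard = m},
      m ≤ n i - n i / 3 := by
    rintro m ⟨F, hFsub, hFd, rfl⟩
    have hFe : F ∩ legSet k n i = F := Set.inter_eq_left.mpr hFsub
    calc F.ncard = (F ∩ legSet k n i).ncard := by rw [hFe]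
    _ ≤ n i - n i / 3 := leg_card_le hFd i
  apply le_antisymm
  · exact csSup_le ⟨0, ∅, Set.empty_subset _, dissoc_empty _, by simp⟩ hub
  · apply le_csSup ⟨n i - n i / 3, hub⟩
    refine ⟨Bset k n i, Bset_subset i, ?_, Bset_ncard i⟩
    exact dissoc_subset (Bset_dissoc Finset.univ)
      (Set.subset_biUnion_of_mem (Finset.mem_univ i))

theorem stmt18 (k : ℕ) (n : Fin k → ℕ) (hn : ∀ i, 1 ≤ n i)
    (h : 1 ≤ (Finset.univ.filter fun i => n i % 3 = 2).card ∨
         2 ≤ (Finset.univ.filter fun i => n i % 3 = 1).card) :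
    (¬ ∃ F, IsDissocSet (spider k n) F ∧ none ∈ F ∧
        F.ncard = (∑ i, dissNumOn (spider k n) (legSet k n i)) + 1) ∧
    dissNum (spider k n) = ∑ i, dissNumOn (spider k n) (legSet k n i) := by
  have hψ : ∀ i ∈ Finset.univ, dissNumOn (spider k n) (legSet k n i) = n i - n i / 3 :=
    fun i _ => dissNumOn_leg i
  have part1 : ¬ ∃ F, IsDissocSet (spider k n) F ∧ none ∈ F ∧
      F.ncard = (∑ i, dissNumOn (spider k n) (legSet k n i)) + 1 := by
    rintro ⟨F, hFd, hnone, hcard⟩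
    rw [Finset.sum_congr rfl hψ] at hcard
    have hdec := ncard_decomp F hnone
    have hle : ∀ i ∈ Finset.univ, (F ∩ legSet k n i).ncard ≤ n i - n i / 3 :=
      fun i _ => leg_card_le hFd i
    have hsum : ∑ i, (F ∩ legSet k n i).ncard = ∑ i, (n i - n i / 3) := by omega
    have heach : ∀ i ∈ Finset.univ, (F ∩ legSet k n i).ncard = n i - n i / 3 :=
      (Finset.sum_eq_sum_iff_of_le hle).mp hsum
    rcases h with h1 | h2
    · obtain ⟨i, hi⟩ := Finset.card_pos.mp h1
      have hmod : n i % 3 = 2 := (Finset.mem_filter.mp hi).2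
      have hc : (legT F i).card = n i - n i / 3 := by
        rw [card_legT]; exact heach i (Finset.mem_univ i)
      have h0 := PD_zero_mem (n i) _ (PD_legT hFd) lt_legT (by omega) hc.ge
      have h1' := PD_one_mem (n i) _ (PD_legT hFd) lt_legT hmod hc.ge
      obtain ⟨j0, hj0F, hj0⟩ := mem_legT.mp h0
      obtain ⟨j1, hj1F, hj1⟩ := mem_legT.mp h1'
      have a1 : (spider k n).Adj (some ⟨i, j0⟩) none :=
        (spider_adj_none.mpr hj0).symm
      have a2 : (spider k n).Adj (some ⟨i, j0⟩) (some ⟨i, j1⟩) :=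
        spider_adj_leg.mpr (by omega)
      have := hFd _ hj0F none hnone _ hj1F a1 a2
      simp at this
    · obtain ⟨i, hi, i', hi', hne⟩ := Finset.one_lt_card.mp h2
      have hmod : n i % 3 = 1 := (Finset.mem_filter.mp hi).2
      have hmod' : n i' % 3 = 1 := (Finset.mem_filter.mp hi').2
      have hc : (legT F i).card = n i - n i / 3 := by
        rw [card_legT]; exact heach i (Finset.mem_univ i)
      have hc' : (legT F i').card = n i' - n i' / 3 := by
        rw [card_legT]; exact heach i' (Finset.mem_univ i')
      have h0 := PD_zero_mem (n i) _ (PD_legT hFd) lt_legT (by omega) hc.ge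
      have h0' := PD_zero_mem (n i') _ (PD_legT hFd) lt_legT (by omega) hc'.ge
      obtain ⟨j0, hj0F, hj0⟩ := mem_legT.mp h0
      obtain ⟨j0', hj0F', hj0'⟩ := mem_legT.mp h0'
      have a1 : (spider k n).Adj none (some ⟨i, j0⟩) := spider_adj_none.mpr hj0
      have a2 : (spider k n).Adj none (some ⟨i', j0'⟩) := spider_adj_none.mpr hj0'
      have := hFd none hnone _ hj0F _ hj0F' a1 a2
      simp only [Option.some.injEq, Sigma.mk.inj_iff] at this
      exact hne this.1
  refine ⟨part1, ?_⟩
  apply le_antisymm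
  · apply csSup_le
    · exact ⟨0, ∅, dissoc_empty _, by simp⟩
    rintro m ⟨F, hFd, rfl⟩
    rw [Finset.sum_congr rfl hψ]
    have h2 := Finset.sum_le_sum (fun i (_ : i ∈ Finset.univ) => leg_card_le hFd i)
    by_cases hnone : none ∈ F
    · have h1 := ncard_decomp F hnone
      have hneq : F.ncard ≠ (∑ i, (n i - n i / 3)) + 1 := by
        intro he
        exact part1 ⟨F, hFd, hnone, by rw [Finset.sum_congr rfl hψ]; exact he⟩
      omega
    · have h1 := ncard_decomp' F hnone
      omega
  · apply le_csSup
    · refine ⟨(∑ i, (n i - n i / 3)) + 1, ?_⟩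
      rintro m ⟨F, hFd, rfl⟩
      have h2 := Finset.sum_le_sum (fun i (_ : i ∈ Finset.univ) => leg_card_le hFd i)
      by_cases hnone : none ∈ F
      · have h1 := ncard_decomp F hnone
        omega
      · have h1 := ncard_decomp' F hnone
        omega
    · refine ⟨⋃ i ∈ Finset.univ, Bset k n i, Bset_dissoc _, ?_⟩
      have hnone : none ∉ ⋃ i ∈ Finset.univ, Bset k n i := by
        intro hx
        obtain ⟨i, -, j, he, -⟩ := Set.mem_iUnion₂.mp hx
        cases he
      rw [ncard_decomp' _ hnone]
      apply Finset.sum_congr rfl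
      intro i _
      have hint : (⋃ i' ∈ Finset.univ, Bset k n i') ∩ legSet k n i = Bset k n i := by
        ext x
        constructor
        · rintro ⟨hx, j, rfl⟩
          obtain ⟨i', -, j', he, hm⟩ := Set.mem_iUnion₂.mp hx
          simp only [Option.some.injEq, Sigma.mk.inj_iff] at he
          obtain ⟨rfl, hj⟩ := he
          rw [heq_eq_eq] at hj
          subst hj
          exact ⟨j, rfl, hm⟩
        · rintro ⟨j, rfl, hm⟩
          exact ⟨Set.mem_biUnion (Finset.mem_univ i) ⟨j, rfl, hm⟩, j, rfl⟩
      rw [hint, Bset_ncard, dissNumOn_leg]
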